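/- Low Rank Reduction: Let A_1,...,A_m ∈ R^{n×n} have rank at most r, constrained by graph G(V,E), and fix factorizations A_σ = X_σ Y_σ^T with X_σ, Y_σ ∈ R^{n×r}. Define A'_{σ₁σ₂} = Y_{σ₁}^T X_{σ₂} ∈ R^{r×r} and construct the graph G'(V',E') with V' = E and an edge from (u,v,σ₁) to (v,w,σ₂) labeled by the pair (σ₂,σ₁) whenever (u,v,σ₁),(v,w,σ₂) ∈ E. Then the constrained joint spectral radii agree: ρ(G,A) = ρ(G',A'). -/

import Mathlib

/-!
Substituting `A_σ = X_σ Y_σᵀ` and regrouping,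
`A_{σ_k} ⋯ A_{σ_0} = X_{σ_k} (Y_{σ_k}ᵀ X_{σ_{k-1}}) ⋯ (Y_{σ_1}ᵀ X_{σ_0}) Y_{σ_0}ᵀ`,
and the middle factor is the `A'`-product along the path of `G'` formed by the consecutive
edge pairs of the path in `G`. Every path of positive length in `G'` arises in this way,
and its product is `Y_{σ_{k+1}}ᵀ (A_{σ_k} ⋯ A_{σ_1}) X_{σ_0}`. Hence a product of length
`k + 1` in either graph is at most a fixed constant times a product of length `k` in the
other, and both the constant and the shift of length disappear under `k`-th roots.
-/

open scoped Classical
open Filter MvPolynomial Matrix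

/-- The Frobenius norm, a submultiplicative matrix norm. -/
noncomputable def frob {a b : ℕ} (M : Matrix (Fin a) (Fin b) ℝ) : ℝ :=
  Real.sqrt (∑ i, ∑ j, (M i j)^2)

/-- The set `E_k` of paths of length `k` in the labeled graph with edge set `E ⊆ V × V × L`:
sequences of `k` edges of `E` such that the target of each edge is the source of the next. -/
noncomputable def pathSet {V L : Type*} [Fintype V] [Fintype L]
    (E : Finset (V × V × L)) (k : ℕ) : Finset (Fin k → V × V × L) :=
  Finset.univ.filter (fun s =>
    (∀ i, s i ∈ E) ∧
    ∀ (i : ℕ) (h : i + 1 < k), (s ⟨i, Nat.lt_of_succ_lt h⟩).2.1 = (s ⟨i+1, h⟩).1)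

/-- The sequence of labels along a path. -/
def labels {V L : Type*} {k : ℕ} (s : Fin k → V × V × L) : Fin k → L :=
  fun i => (s i).2.2

/-- The product of matrices along a label sequence: `A_s = A_{σ_k} ⋯ A_{σ_1}`. -/
noncomputable def prodA {n : ℕ} {L : Type*} (A : L → Matrix (Fin n) (Fin n) ℝ)
    {k : ℕ} (σ : Fin k → L) : Matrix (Fin n) (Fin n) ℝ :=
  ((List.ofFn σ).reverse.map A).prod

/-- Maximum of a real-valued function over a (nonempty) finite set. -/
noncomputable def maxOver {α : Type*} (s : Finset α) (f : α → ℝ) : ℝ :=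
  sSup (f '' ↑s)

/-- Strong connectivity: every node reaches every node by a path of length ≥ 1. -/
def StronglyConnected {V L : Type*} [Fintype V] [Fintype L]
    (E : Finset (V × V × L)) : Prop :=
  ∀ u v : V, ∃ k : ℕ, ∃ s ∈ pathSet E (k+1), (s 0).1 = u ∧ (s (Fin.last k)).2.1 = v

attribute [local instance] Matrix.frobeniusSeminormedAddCommGroup

section Frobenius

variable {a b c : ℕ}

lemma frob_eq_norm (M : Matrix (Fin a) (Fin b) ℝ) : frob M = ‖M‖ := by
  rw [Matrix.frobenius_norm_def, frob, Real.sqrt_eq_rpow]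
  simp [Real.norm_eq_abs, sq_abs]

lemma frob_nonneg (M : Matrix (Fin a) (Fin b) ℝ) : 0 ≤ frob M := Real.sqrt_nonneg _

lemma frob_transpose (M : Matrix (Fin a) (Fin b) ℝ) : frob Mᵀ = frob M := by
  simp only [frob_eq_norm, Matrix.frobenius_norm_transpose]

lemma frob_mul_le (M : Matrix (Fin a) (Fin b) ℝ) (N : Matrix (Fin b) (Fin c) ℝ) :
    frob (M * N) ≤ frob M * frob N := by
  simpa only [frob_eq_norm] using Matrix.frobenius_norm_mul M N

lemma frob_mul_mul_le {d : ℕ} (M : Matrix (Fin a) (Fin b) ℝ) (P : Matrix (Fin b) (Fin c) ℝ)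
    (N : Matrix (Fin c) (Fin d) ℝ) : frob (M * P * N) ≤ frob M * frob N * frob P :=
  calc frob (M * P * N) ≤ frob M * frob P * frob N :=
        (frob_mul_le _ _).trans (mul_le_mul_of_nonneg_right (frob_mul_le _ _) (frob_nonneg _))
    _ = frob M * frob N * frob P := by ring

end Frobenius

section MaxOver

variable {α : Type*} {s : Finset α} {f : α → ℝ}

lemma le_maxOver {x : α} (hx : x ∈ s) : f x ≤ maxOver s f :=
  le_csSup (s.finite_toSet.image f).bddAbove ⟨x, hx, rfl⟩

lemma maxOver_nonneg (h : ∀ x ∈ s, 0 ≤ f x) : 0 ≤ maxOver s f := by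
  rcases s.eq_empty_or_nonempty with rfl | ⟨x, hx⟩
  · simp [maxOver]
  · exact (h x hx).trans (le_maxOver hx)

lemma maxOver_le {B : ℝ} (hB : 0 ≤ B) (h : ∀ x ∈ s, f x ≤ B) : maxOver s f ≤ B :=
  Real.sSup_le (by rintro _ ⟨x, hx, rfl⟩; exact h x hx) hB

end MaxOver

section Paths

variable {V L : Type*} [Fintype V] [Fintype L] {E : Finset (V × V × L)} {k : ℕ}

lemma mem_pathSet_iff {s : Fin k → V × V × L} :
    s ∈ pathSet E k ↔
      (∀ i, s i ∈ E) ∧ ∀ i j : Fin k, (j : ℕ) = i + 1 → (s i).2.1 = (s j).1 := by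
  simp only [pathSet, Finset.mem_filter, Finset.mem_univ, true_and]
  refine and_congr_right fun _ =>
    ⟨fun h i j hij => ?_, fun h i hi => h ⟨i, _⟩ ⟨i + 1, hi⟩ rfl⟩
  obtain ⟨j, hj⟩ := j
  subst hij
  exact h i hj

lemma mem_pathSet_succ_iff {s : Fin (k + 1) → V × V × L} :
    s ∈ pathSet E (k + 1) ↔
      (∀ i, s i ∈ E) ∧ ∀ i : Fin k, (s i.castSucc).2.1 = (s i.succ).1 := by
  refine mem_pathSet_iff.trans
    (and_congr_right fun _ => ⟨fun h i => h _ _ rfl, fun h i j hij => ?_⟩)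
  obtain ⟨i, hi⟩ := i
  obtain ⟨j, hj⟩ := j
  simp only at hij
  subst hij
  exact h ⟨i, by omega⟩

lemma init_mem_pathSet {s : Fin (k + 1) → V × V × L} (hs : s ∈ pathSet E (k + 1)) :
    Fin.init s ∈ pathSet E k := by
  rw [mem_pathSet_iff] at hs ⊢
  exact ⟨fun i => hs.1 _, fun i j hij => hs.2 _ _ hij⟩

lemma tail_mem_pathSet {s : Fin (k + 1) → V × V × L} (hs : s ∈ pathSet E (k + 1)) :
    Fin.tail s ∈ pathSet E k := by
  rw [mem_pathSet_iff] at hs ⊢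
  exact ⟨fun i => hs.1 _, fun i j hij => hs.2 _ _ (by simp [hij])⟩

end Paths

/-- The graph `G'`, whose vertices are the edges of `G`. -/
noncomputable def lineGraph {V L : Type*} [Fintype V] [Fintype L] (E : Finset (V × V × L)) :
    Finset ((V × V × L) × (V × V × L) × (L × L)) :=
  Finset.univ.filter fun x =>
    x.1 ∈ E ∧ x.2.1 ∈ E ∧ x.1.2.1 = x.2.1.1 ∧ x.2.2 = (x.2.1.2.2, x.1.2.2)

def adjPairs {L : Type*} {k : ℕ} (σ : Fin (k + 1) → L) : Fin k → L × L :=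
  fun i => (σ i.succ, σ i.castSucc)

def linePath {V L : Type*} {k : ℕ} (s : Fin (k + 1) → V × V × L) :
    Fin k → (V × V × L) × (V × V × L) × (L × L) :=
  fun i => (s i.castSucc, s i.succ, adjPairs (labels s) i)

section LineGraph

variable {V L : Type*} [Fintype V] [Fintype L] {E : Finset (V × V × L)} {k : ℕ}

lemma mem_lineGraph {e f : V × V × L} {l : L × L} :
    (e, f, l) ∈ lineGraph E ↔ e ∈ E ∧ f ∈ E ∧ e.2.1 = f.1 ∧ l = (f.2.2, e.2.2) := by
  simp [lineGraph]

lemma linePath_mem_pathSet {s : Fin (k + 1) → V × V × L} (hs : s ∈ pathSet E (k + 1)) :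
    linePath s ∈ pathSet (lineGraph E) k := by
  rw [mem_pathSet_succ_iff] at hs
  refine mem_pathSet_iff.2
    ⟨fun i => mem_lineGraph.2 ⟨hs.1 _, hs.1 _, hs.2 i, rfl⟩, fun i j hij => ?_⟩
  show s i.succ = s j.castSucc
  congr 1
  ext
  simp [hij]

lemma exists_linePath_eq {t : Fin (k + 1) → (V × V × L) × (V × V × L) × (L × L)}
    (ht : t ∈ pathSet (lineGraph E) (k + 1)) : ∃ s ∈ pathSet E (k + 2), linePath s = t := by
  obtain ⟨htE, htc⟩ := mem_pathSet_succ_iff.1 ht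
  have hmem := fun i => mem_lineGraph.1 (htE i)
  set s : Fin (k + 2) → V × V × L := Fin.cons (t 0).1 fun i => (t i).2.1
  have hs_succ (i : Fin (k + 1)) : s i.succ = (t i).2.1 := Fin.cons_succ _ _ _
  have hs_castSucc (i : Fin (k + 1)) : s i.castSucc = (t i).1 := by
    cases i using Fin.cases with
    | zero => rfl
    | succ i => rw [← Fin.succ_castSucc, hs_succ, htc]
  refine ⟨s, mem_pathSet_succ_iff.2 ⟨fun i => ?_, fun i => ?_⟩, funext fun i => ?_⟩
  · cases i using Fin.cases with
    | zero => exact (hmem 0).1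
    | succ i => exact hs_succ i ▸ (hmem i).2.1
  · rw [hs_castSucc, hs_succ]
    exact (hmem i).2.2.1
  · simp only [linePath, adjPairs, labels, hs_castSucc, hs_succ, ← (hmem i).2.2.2]

end LineGraph

section Factorization

variable {n r : ℕ} {L : Type*} (X Y : L → Matrix (Fin n) (Fin r) ℝ)

lemma prodA_zero (A : L → Matrix (Fin n) (Fin n) ℝ) (σ : Fin 0 → L) : prodA A σ = 1 := by
  simp [prodA]

lemma prodA_succ (A : L → Matrix (Fin n) (Fin n) ℝ) {k : ℕ} (σ : Fin (k + 1) → L) :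
    prodA A σ = A (σ (Fin.last k)) * prodA A (Fin.init σ) := by
  rw [prodA, prodA, List.ofFn_succ', List.concat_eq_append, List.reverse_append]
  simp only [List.reverse_singleton, List.singleton_append, List.map_cons, List.prod_cons]
  rfl

lemma prodA_mul_transpose {k : ℕ} (σ : Fin (k + 1) → L) :
    prodA (fun a => X a * (Y a)ᵀ) σ =
      X (σ (Fin.last k)) * prodA (fun p => (Y p.1)ᵀ * X p.2) (adjPairs σ) * (Y (σ 0))ᵀ := by
  induction k with
  | zero => simp [prodA_succ, prodA_zero]
  | succ k ih =>
    rw [prodA_succ, ih, prodA_succ _ (adjPairs σ)]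
    simp only [Matrix.mul_assoc]
    rfl

lemma prodA_transpose_mul_adjPairs {k : ℕ} (σ : Fin (k + 2) → L) :
    prodA (fun p => (Y p.1)ᵀ * X p.2) (adjPairs σ) =
      (Y (σ (Fin.last (k + 1))))ᵀ *
        prodA (fun a => X a * (Y a)ᵀ) (fun i : Fin k => σ i.succ.castSucc) * X (σ 0) := by
  induction k with
  | zero =>
    simp only [prodA_succ, prodA_zero, mul_one, Matrix.mul_one]
    rfl
  | succ k ih =>
    rw [prodA_succ _ (adjPairs σ), prodA_succ _ (fun i : Fin (k + 1) => σ i.succ.castSucc),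
      show Fin.init (adjPairs σ) = adjPairs (Fin.init σ) from rfl, ih]
    simp only [Matrix.mul_assoc]
    rfl

end Factorization

section Bounds

variable {n r : ℕ} {L : Type*} (X Y : L → Matrix (Fin n) (Fin r) ℝ) {K : ℝ}

lemma frob_prodA_mul_transpose_le (hK : ∀ a b, frob (X a) * frob (Y b) ≤ K) {k : ℕ}
    (σ : Fin (k + 1) → L) :
    frob (prodA (fun a => X a * (Y a)ᵀ) σ) ≤
      K * frob (prodA (fun p => (Y p.1)ᵀ * X p.2) (adjPairs σ)) := by
  rw [prodA_mul_transpose]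
  refine (frob_mul_mul_le _ _ _).trans (mul_le_mul_of_nonneg_right ?_ (frob_nonneg _))
  rw [frob_transpose]
  exact hK _ _

lemma frob_prodA_adjPairs_le (hK : ∀ a b, frob (X a) * frob (Y b) ≤ K) {k : ℕ}
    (σ : Fin (k + 2) → L) :
    frob (prodA (fun p => (Y p.1)ᵀ * X p.2) (adjPairs σ)) ≤
      K * frob (prodA (fun a => X a * (Y a)ᵀ) fun i : Fin k => σ i.succ.castSucc) := by
  rw [prodA_transpose_mul_adjPairs]
  refine (frob_mul_mul_le _ _ _).trans (mul_le_mul_of_nonneg_right ?_ (frob_nonneg _))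
  rw [frob_transpose, mul_comm]
  exact hK _ _

end Bounds

lemma tendsto_mul_pow_rpow_one_div {b : ℕ → ℝ} {ρ C : ℝ} (hC : 0 < C) (hb0 : ∀ k, 0 ≤ b k)
    (hb : Tendsto b atTop (nhds ρ)) :
    Tendsto (fun k : ℕ => (C * b k ^ k) ^ ((1 : ℝ) / (k + 1))) atTop (nhds ρ) := by
  have hC_root : Tendsto (fun k : ℕ => C ^ ((1 : ℝ) / (k + 1))) atTop (nhds 1) := by
    simpa using
      tendsto_const_nhds.rpow tendsto_one_div_add_atTop_nhds_zero_nat (Or.inl hC.ne')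
  have hb_root : Tendsto (fun k : ℕ => b k ^ ((k : ℝ) / (k + 1))) atTop (nhds ρ) := by
    simpa using hb.rpow (tendsto_natCast_div_add_atTop (1 : ℝ)) (Or.inr one_pos)
  have hprod := hC_root.mul hb_root
  rw [one_mul] at hprod
  refine hprod.congr fun k => ?_
  rw [Real.mul_rpow hC.le (pow_nonneg (hb0 k) k), ← Real.rpow_natCast_mul (hb0 k), mul_one_div]

noncomputable def cjsrSeq {V L : Type*} [Fintype V] [Fintype L] {n : ℕ}
    (E : Finset (V × V × L)) (A : L → Matrix (Fin n) (Fin n) ℝ) (k : ℕ) : ℝ :=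
  maxOver (pathSet E k) fun s => frob (prodA A (labels s)) ^ ((1 : ℝ) / k)

section Cjsr

variable {V W L M : Type*} [Fintype V] [Fintype W] [Fintype L] [Fintype M] {n p : ℕ}
  {E : Finset (V × V × L)} {F : Finset (W × W × M)}
  {A : L → Matrix (Fin n) (Fin n) ℝ} {B : M → Matrix (Fin p) (Fin p) ℝ} {k : ℕ}

lemma cjsrSeq_nonneg : 0 ≤ cjsrSeq E A k :=
  maxOver_nonneg fun _ _ => Real.rpow_nonneg (frob_nonneg _) _

lemma frob_prodA_le_cjsrSeq_pow (hk : k ≠ 0) {s : Fin k → V × V × L} (hs : s ∈ pathSet E k) :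
    frob (prodA A (labels s)) ≤ cjsrSeq E A k ^ k :=
  calc frob (prodA A (labels s)) = (frob (prodA A (labels s)) ^ ((1 : ℝ) / k)) ^ k := by
        rw [one_div, Real.rpow_inv_natCast_pow (frob_nonneg _) hk]
    _ ≤ cjsrSeq E A k ^ k :=
        pow_le_pow_left₀ (Real.rpow_nonneg (frob_nonneg _) _)
          (le_maxOver (f := fun s => frob (prodA A (labels s)) ^ ((1 : ℝ) / k)) hs) k

lemma cjsrSeq_succ_le {C : ℝ} (hC : 0 ≤ C) (hk : k ≠ 0)
    (h : ∀ s ∈ pathSet E (k + 1), ∃ t ∈ pathSet F k,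
      frob (prodA A (labels s)) ≤ C * frob (prodA B (labels t))) :
    cjsrSeq E A (k + 1) ≤ (C * cjsrSeq F B k ^ k) ^ ((1 : ℝ) / (k + 1)) := by
  have hbound : 0 ≤ C * cjsrSeq F B k ^ k := mul_nonneg hC (pow_nonneg cjsrSeq_nonneg k)
  refine maxOver_le (Real.rpow_nonneg hbound _) fun s hs => ?_
  obtain ⟨t, ht, hst⟩ := h s hs
  rw [Nat.cast_succ]
  exact Real.rpow_le_rpow (frob_nonneg _)
    (hst.trans (mul_le_mul_of_nonneg_left (frob_prodA_le_cjsrSeq_pow hk ht) hC)) (by positivity)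

lemma le_of_tendsto_cjsrSeq {C ρ ρ' : ℝ} (hC : 0 < C)
    (h : ∀ k, ∀ s ∈ pathSet E (k + 1), ∃ t ∈ pathSet F k,
      frob (prodA A (labels s)) ≤ C * frob (prodA B (labels t)))
    (hρ : Tendsto (cjsrSeq E A) atTop (nhds ρ)) (hρ' : Tendsto (cjsrSeq F B) atTop (nhds ρ')) :
    ρ ≤ ρ' :=
  le_of_tendsto_of_tendsto (hρ.comp (tendsto_add_atTop_nat 1))
    (tendsto_mul_pow_rpow_one_div hC (fun _ => cjsrSeq_nonneg) hρ')
    (eventually_ne_atTop 0 |>.mono fun k hk => cjsrSeq_succ_le hC.le hk (h k))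

end Cjsr

theorem low_rank_reduction_general {m n r : ℕ} (A : Fin m → Matrix (Fin n) (Fin n) ℝ)
    (X Y : Fin m → Matrix (Fin n) (Fin r) ℝ)
    (hA : ∀ σ, A σ = X σ * (Y σ)ᵀ)
    {V : Type*} [Fintype V] (E : Finset (V × V × Fin m))
    (A' : Fin m × Fin m → Matrix (Fin r) (Fin r) ℝ)
    (hA' : ∀ p : Fin m × Fin m, A' p = (Y p.1)ᵀ * X p.2)
    (E' : Finset ((V × V × Fin m) × (V × V × Fin m) × (Fin m × Fin m)))
    (hE' : ∀ e f : V × V × Fin m, ∀ l : Fin m × Fin m,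
      (e, f, l) ∈ E' ↔ e ∈ E ∧ f ∈ E ∧ e.2.1 = f.1 ∧ l = (f.2.2, e.2.2))
    (ρ ρ' : ℝ)
    (hρ : Tendsto (fun k : ℕ =>
        maxOver (pathSet E k) (fun s => frob (prodA A (labels s)) ^ ((1:ℝ)/k)))
      atTop (nhds ρ))
    (hρ' : Tendsto (fun k : ℕ =>
        maxOver (pathSet E' k) (fun s => frob (prodA A' (labels s)) ^ ((1:ℝ)/k)))
      atTop (nhds ρ')) :
    ρ = ρ' := by
  obtain rfl : A = fun a => X a * (Y a)ᵀ := funext hA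
  obtain rfl : A' = fun p => (Y p.1)ᵀ * X p.2 := funext hA'
  obtain rfl : E' = lineGraph E := by
    ext ⟨e, f, l⟩
    rw [hE', mem_lineGraph]
  obtain ⟨K, hK⟩ := Finite.bddAbove_range fun p : Fin m × Fin m => frob (X p.1) * frob (Y p.2)
  have hK' (a b : Fin m) : frob (X a) * frob (Y b) ≤ max K 1 :=
    (hK ⟨(a, b), rfl⟩).trans (le_max_left _ _)
  have hK_pos : 0 < max K 1 := zero_lt_one.trans_le (le_max_right _ _)
  refine le_antisymm (le_of_tendsto_cjsrSeq hK_pos (fun k s hs => ?_) hρ hρ')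
    (le_of_tendsto_cjsrSeq hK_pos (fun k t ht => ?_) hρ' hρ)
  · exact ⟨linePath s, linePath_mem_pathSet hs, frob_prodA_mul_transpose_le X Y hK' _⟩
  · obtain ⟨s, hs, rfl⟩ := exists_linePath_eq ht
    exact ⟨_, tail_mem_pathSet (init_mem_pathSet hs), frob_prodA_adjPairs_le X Y hK' _⟩

/-- Low Rank Reduction: if `A_σ = X_σ Y_σᵀ` with `X_σ, Y_σ ∈ ℝ^{n×r}`
(so `rank A_σ ≤ r`), `A'_{σ₁σ₂} = Y_{σ₁}ᵀ X_{σ₂} ∈ ℝ^{r×r}`, and `G'(V',E')` is the graph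
with `V' = E` and an edge from `(u,v,σ₁)` to `(v,w,σ₂)` labeled `(σ₂,σ₁)` whenever both
are edges of `G`, then the two constrained joint spectral radii agree:
`ρ(G,A) = ρ(G',A')`. -/
theorem low_rank_reduction {m n r : ℕ} (A : Fin m → Matrix (Fin n) (Fin n) ℝ)
    (X Y : Fin m → Matrix (Fin n) (Fin r) ℝ)
    (hA : ∀ σ, A σ = X σ * (Y σ)ᵀ)
    {V : Type*} [Fintype V] (E : Finset (V × V × Fin m)) (hSC : StronglyConnected E)
    (A' : Fin m × Fin m → Matrix (Fin r) (Fin r) ℝ)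
    (hA' : ∀ p : Fin m × Fin m, A' p = (Y p.1)ᵀ * X p.2)
    (E' : Finset ((V × V × Fin m) × (V × V × Fin m) × (Fin m × Fin m)))
    (hE' : ∀ e f : V × V × Fin m, ∀ l : Fin m × Fin m,
      (e, f, l) ∈ E' ↔ e ∈ E ∧ f ∈ E ∧ e.2.1 = f.1 ∧ l = (f.2.2, e.2.2))
    (ρ ρ' : ℝ)
    (hρ : Tendsto (fun k : ℕ =>
        maxOver (pathSet E k) (fun s => frob (prodA A (labels s)) ^ ((1:ℝ)/k)))
      atTop (nhds ρ))
    (hρ' : Tendsto (fun k : ℕ =>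
        maxOver (pathSet E' k) (fun s => frob (prodA A' (labels s)) ^ ((1:ℝ)/k)))
      atTop (nhds ρ')) :
    ρ = ρ' :=
  low_rank_reduction_general A X Y hA E A' hA' E' hE' ρ ρ' hρ hρ'
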